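/- On (ℂ²_{A₁} ⊗ ℂ²_B) ⊗ (ℂ²_{A₂} ⊗ ℂ²_C), let W = 𝟙⊗𝟙 + 2·𝟙⊗φ⁺ + 2·φ⁺⊗𝟙 − 8·φ⁺⊗φ⁺, where in each tensor slot the first operator acts on A₁B and the second on A₂C, and φ⁺ is the projector onto (|00⟩+|11⟩)/√2. Then for each M ∈ {A, B, C} (with A = A₁A₂) there exist positive semidefinite matrices P_M and Q_M such that W = P_M + Q_M^{Γ_M}, where Γ_M denotes partial transposition with respect to the qubit factors held by M. (Consequently W is a fully decomposable genuine-multipartite-entanglement witness for the tripartition A|B|C.) -/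

import Mathlib

/-! Let `F` be the swap of two qubits. Transposing one qubit maps `F` to `2 φ⁺` and fixes `𝟙`,
and `F` is a self-adjoint involution, so `Sym = (𝟙 + F)/2` and `Asym = (𝟙 - F)/2` are
projectors, as are `φ⁺` and `𝟙 - φ⁺`. Hence `W^{Γ_B} = 2 Sym ⊗ (𝟙 - φ⁺) + 6 Asym ⊗ φ⁺` is
positive semidefinite, so `P_B = 0` works, and symmetrically for `C`; for `A`,
`W = 2 ((𝟙 - φ⁺) ⊗ φ⁺ + φ⁺ ⊗ (𝟙 - φ⁺)) + (2 (Sym ⊗ Asym + Asym ⊗ Sym))^{Γ_A}`. -/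

open scoped BigOperators ComplexOrder

noncomputable section

/-- Projector onto the `d`-dimensional maximally entangled state
`|φ⁺_d⟩ = (1/√d) ∑ᵢ |ii⟩`, as a matrix on `ℂ^d ⊗ ℂ^d`. -/
def phiPlus (d : ℕ) : Matrix (Fin d × Fin d) (Fin d × Fin d) ℂ :=
  fun x y => if x.1 = x.2 ∧ y.1 = y.2 then (1 / (d : ℂ)) else 0

/-- The `d`-dimensional isotropic state with visibility `p`:
`ρ(p) = p φ⁺_d + (1-p) 𝟙/d²`. -/
def iso (d : ℕ) (p : ℝ) : Matrix (Fin d × Fin d) (Fin d × Fin d) ℂ :=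
  (p : ℂ) • phiPlus d +
    (((1 - p) / (d : ℝ) ^ 2 : ℝ) : ℂ) • (1 : Matrix (Fin d × Fin d) (Fin d × Fin d) ℂ)

/-- The (possibly unnormalized) projector `|ψ⟩⟨ψ|` onto a vector `ψ`. -/
def vecProj {ι : Type} (ψ : ι → ℂ) : Matrix ι ι ℂ :=
  fun i j => ψ i * (starRingEnd ℂ) (ψ j)

/-- `m₁ ⊗ m₂` on the four-qubit space, the first factor acting on qubits `0, 1`
(i.e. `A₁B`) and the second on qubits `2, 3` (i.e. `A₂C`). -/
def sl (m₁ m₂ : Matrix (Fin 2 × Fin 2) (Fin 2 × Fin 2) ℂ) :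
    Matrix (Fin 4 → Fin 2) (Fin 4 → Fin 2) ℂ :=
  fun x y => m₁ (x 0, x 1) (y 0, y 1) * m₂ (x 2, x 3) (y 2, y 3)

/-- Partial transposition with respect to the qubits in `S`. -/
def ptr {n : ℕ} (S : Finset (Fin n))
    (X : Matrix (Fin n → Fin 2) (Fin n → Fin 2) ℂ) :
    Matrix (Fin n → Fin 2) (Fin n → Fin 2) ℂ :=
  fun x y => X (fun c => if c ∈ S then y c else x c) (fun c => if c ∈ S then x c else y c)

/-- The GME witness `W = 𝟙⊗𝟙 + 2 𝟙⊗φ⁺ + 2 φ⁺⊗𝟙 − 8 φ⁺⊗φ⁺` on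
`ℂ²_{A₁} ⊗ ℂ²_B ⊗ ℂ²_{A₂} ⊗ ℂ²_C` (qubits `0,1,2,3` = `A₁,B,A₂,C`). -/
noncomputable def Wstar : Matrix (Fin 4 → Fin 2) (Fin 4 → Fin 2) ℂ :=
  sl 1 1 + (2 : ℂ) • sl 1 (phiPlus 2) + (2 : ℂ) • sl (phiPlus 2) 1
    - (8 : ℂ) • sl (phiPlus 2) (phiPlus 2)

open Matrix
open scoped Kronecker MatrixOrder

section PartialTranspose

variable {m n α : Type*}

def ptFst (X : Matrix (m × n) (m × n) α) : Matrix (m × n) (m × n) α :=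
  fun x y => X (y.1, x.2) (x.1, y.2)

def ptSnd (X : Matrix (m × n) (m × n) α) : Matrix (m × n) (m × n) α :=
  fun x y => X (x.1, y.2) (y.1, x.2)

@[simp] lemma ptFst_add [Add α] (X Y : Matrix (m × n) (m × n) α) :
    ptFst (X + Y) = ptFst X + ptFst Y := rfl

@[simp] lemma ptFst_sub [Sub α] (X Y : Matrix (m × n) (m × n) α) :
    ptFst (X - Y) = ptFst X - ptFst Y := rfl

@[simp] lemma ptFst_smul {R : Type*} [SMul R α] (c : R) (X : Matrix (m × n) (m × n) α) :
    ptFst (c • X) = c • ptFst X := rfl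

@[simp] lemma ptSnd_add [Add α] (X Y : Matrix (m × n) (m × n) α) :
    ptSnd (X + Y) = ptSnd X + ptSnd Y := rfl

@[simp] lemma ptSnd_sub [Sub α] (X Y : Matrix (m × n) (m × n) α) :
    ptSnd (X - Y) = ptSnd X - ptSnd Y := rfl

@[simp] lemma ptSnd_smul {R : Type*} [SMul R α] (c : R) (X : Matrix (m × n) (m × n) α) :
    ptSnd (c • X) = c • ptSnd X := rfl

@[simp] lemma ptFst_one [DecidableEq m] [DecidableEq n] [Zero α] [One α] :
    ptFst (1 : Matrix (m × n) (m × n) α) = 1 := by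
  ext x y
  simp only [ptFst, one_apply, Prod.ext_iff]
  grind

@[simp] lemma ptSnd_one [DecidableEq m] [DecidableEq n] [Zero α] [One α] :
    ptSnd (1 : Matrix (m × n) (m × n) α) = 1 := by
  ext x y
  simp only [ptSnd, one_apply, Prod.ext_iff]
  grind

end PartialTranspose

section Swap

variable (n : Type*) [DecidableEq n]

def swapMatrix : Matrix (n × n) (n × n) ℂ :=
  fun x y => if x = y.swap then 1 else 0

def symProj : Matrix (n × n) (n × n) ℂ :=
  (2 : ℂ)⁻¹ • (1 + swapMatrix n)

def antisymProj : Matrix (n × n) (n × n) ℂ :=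
  (2 : ℂ)⁻¹ • (1 - swapMatrix n)

variable {n}

lemma swapMatrix_isSelfAdjoint : IsSelfAdjoint (swapMatrix n) := by
  ext x y
  have h : y = x.swap ↔ x = y.swap := by
    constructor <;> rintro rfl <;> simp
  simp [swapMatrix, h]

lemma swapMatrix_mul_self [Fintype n] : swapMatrix n * swapMatrix n = 1 := by
  ext x y
  simp [swapMatrix, mul_apply, one_apply]

lemma isStarProjection_half_one_add {R : Type*} [Ring R] [StarRing R] [Algebra ℂ R]
    [StarModule ℂ R] {u : R} (hu : IsSelfAdjoint u) (huu : u * u = 1) :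
    IsStarProjection ((2 : ℂ)⁻¹ • (1 + u)) := by
  refine ⟨?_, ?_⟩
  · simp only [IsIdempotentElem, smul_mul_smul, add_mul, mul_add, huu, one_mul, mul_one]
    module
  · exact IsSelfAdjoint.smul (by simp [IsSelfAdjoint]) ((IsSelfAdjoint.one R).add hu)

lemma ptFst_swapMatrix (d : ℕ) : ptFst (swapMatrix (Fin d)) = (d : ℂ) • phiPlus d := by
  ext x y
  have hd : (d : ℂ) ≠ 0 := Nat.cast_ne_zero.mpr (Fin.pos x.1).ne'
  simp [ptFst, swapMatrix, phiPlus, hd, eq_comm, and_comm]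

lemma ptSnd_swapMatrix (d : ℕ) : ptSnd (swapMatrix (Fin d)) = (d : ℂ) • phiPlus d := by
  ext x y
  have hd : (d : ℂ) ≠ 0 := Nat.cast_ne_zero.mpr (Fin.pos x.1).ne'
  simp [ptSnd, swapMatrix, phiPlus, hd, eq_comm]

lemma isStarProjection_phiPlus (d : ℕ) : IsStarProjection (phiPlus d) := by
  refine ⟨?_, ?_⟩
  · ext x y
    have hd : (d : ℂ) ≠ 0 := Nat.cast_ne_zero.mpr (Fin.pos x.1).ne'
    simp only [phiPlus, mul_apply]
    by_cases hx : x.1 = x.2 <;> by_cases hy : y.1 = y.2 <;>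
      simp [hx, hy, Fintype.sum_prod_type]
    exact mul_inv_cancel_left₀ hd _
  · ext x y
    simp [phiPlus, apply_ite (starRingEnd ℂ), and_comm]

lemma isStarProjection_symProj [Fintype n] : IsStarProjection (symProj n) :=
  isStarProjection_half_one_add swapMatrix_isSelfAdjoint swapMatrix_mul_self

lemma isStarProjection_antisymProj [Fintype n] : IsStarProjection (antisymProj n) := by
  rw [antisymProj, sub_eq_add_neg]
  exact isStarProjection_half_one_add swapMatrix_isSelfAdjoint.neg
    (by rw [neg_mul_neg, swapMatrix_mul_self])

end Swap

lemma IsStarProjection.posSemidef {𝕜 n : Type*} [RCLike 𝕜] [Fintype n] {p : Matrix n n 𝕜}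
    (hp : IsStarProjection p) : p.PosSemidef :=
  nonneg_iff_posSemidef.mp hp.nonneg

lemma IsStarProjection.one_sub_posSemidef {𝕜 n : Type*} [RCLike 𝕜] [Fintype n] [DecidableEq n]
    {p : Matrix n n 𝕜} (hp : IsStarProjection p) : (1 - p).PosSemidef :=
  nonneg_iff_posSemidef.mp hp.one_sub_nonneg

theorem Matrix.PosSemidef.sl {X Y : Matrix (Fin 2 × Fin 2) (Fin 2 × Fin 2) ℂ}
    (hX : X.PosSemidef) (hY : Y.PosSemidef) : (sl X Y).PosSemidef :=
  (hX.kronecker hY).submatrix fun x : Fin 4 → Fin 2 => ((x 0, x 1), (x 2, x 3))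

section Ptr

variable {n : ℕ} (S : Finset (Fin n))

@[simp] lemma ptr_add (X Y : Matrix (Fin n → Fin 2) (Fin n → Fin 2) ℂ) :
    ptr S (X + Y) = ptr S X + ptr S Y := rfl

@[simp] lemma ptr_smul (c : ℂ) (X : Matrix (Fin n → Fin 2) (Fin n → Fin 2) ℂ) :
    ptr S (c • X) = c • ptr S X := rfl

end Ptr

section PtrSl

variable (X Y : Matrix (Fin 2 × Fin 2) (Fin 2 × Fin 2) ℂ)

lemma ptr_zero_two_sl : ptr {0, 2} (sl X Y) = sl (ptFst X) (ptFst Y) := by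
  ext x y
  simp [ptr, sl, ptFst]

lemma ptr_one_sl : ptr {1} (sl X Y) = sl (ptSnd X) Y := by
  ext x y
  simp [ptr, sl, ptSnd]

lemma ptr_three_sl : ptr {3} (sl X Y) = sl X (ptSnd Y) := by
  ext x y
  simp [ptr, sl, ptSnd]

end PtrSl

local notation "φ⁺" => phiPlus 2
local notation "Sym" => symProj (Fin 2)
local notation "Asym" => antisymProj (Fin 2)

lemma Wstar_eq_add_ptr_zero_two :
    Wstar = (2 : ℂ) • (sl (1 - φ⁺) φ⁺ + sl φ⁺ (1 - φ⁺)) +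
      ptr {0, 2} ((2 : ℂ) • (sl Sym Asym + sl Asym Sym)) := by
  simp only [ptr_add, ptr_smul, ptr_zero_two_sl, symProj, antisymProj, ptFst_smul, ptFst_add,
    ptFst_sub, ptFst_one, ptFst_swapMatrix]
  ext x y
  simp only [Wstar, sl, Matrix.add_apply, Matrix.sub_apply, Matrix.smul_apply, smul_eq_mul,
    Nat.cast_ofNat]
  ring

lemma Wstar_eq_ptr_one :
    Wstar = ptr {1} ((2 : ℂ) • sl Sym (1 - φ⁺) + (6 : ℂ) • sl Asym φ⁺) := by
  simp only [ptr_add, ptr_smul, ptr_one_sl, symProj, antisymProj, ptSnd_smul, ptSnd_add,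
    ptSnd_sub, ptSnd_one, ptSnd_swapMatrix]
  ext x y
  simp only [Wstar, sl, Matrix.add_apply, Matrix.sub_apply, Matrix.smul_apply, smul_eq_mul,
    Nat.cast_ofNat]
  ring

lemma Wstar_eq_ptr_three :
    Wstar = ptr {3} ((2 : ℂ) • sl (1 - φ⁺) Sym + (6 : ℂ) • sl φ⁺ Asym) := by
  simp only [ptr_add, ptr_smul, ptr_three_sl, symProj, antisymProj, ptSnd_smul, ptSnd_add,
    ptSnd_sub, ptSnd_one, ptSnd_swapMatrix]
  ext x y
  simp only [Wstar, sl, Matrix.add_apply, Matrix.sub_apply, Matrix.smul_apply, smul_eq_mul,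
    Nat.cast_ofNat]
  ring

theorem Wstar_fully_decomposable :
    (∃ P Q : Matrix (Fin 4 → Fin 2) (Fin 4 → Fin 2) ℂ,
        P.PosSemidef ∧ Q.PosSemidef ∧ Wstar = P + ptr {0, 2} Q) ∧
    (∃ P Q : Matrix (Fin 4 → Fin 2) (Fin 4 → Fin 2) ℂ,
        P.PosSemidef ∧ Q.PosSemidef ∧ Wstar = P + ptr {1} Q) ∧
    (∃ P Q : Matrix (Fin 4 → Fin 2) (Fin 4 → Fin 2) ℂ,
        P.PosSemidef ∧ Q.PosSemidef ∧ Wstar = P + ptr {3} Q) := by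
  have hφ := isStarProjection_phiPlus 2
  have hSym : (Sym).PosSemidef := isStarProjection_symProj.posSemidef
  have hAsym : (Asym).PosSemidef := isStarProjection_antisymProj.posSemidef
  have two : (0 : ℂ) ≤ 2 := by norm_num
  have six : (0 : ℂ) ≤ 6 := by norm_num
  refine ⟨⟨_, _, ?_, ?_, Wstar_eq_add_ptr_zero_two⟩,
    ⟨0, _, .zero, ?_, by rw [zero_add]; exact Wstar_eq_ptr_one⟩,
    ⟨0, _, .zero, ?_, by rw [zero_add]; exact Wstar_eq_ptr_three⟩⟩
  · exact ((hφ.one_sub_posSemidef.sl hφ.posSemidef).add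
      (hφ.posSemidef.sl hφ.one_sub_posSemidef)).smul two
  · exact ((hSym.sl hAsym).add (hAsym.sl hSym)).smul two
  · exact ((hSym.sl hφ.one_sub_posSemidef).smul two).add ((hAsym.sl hφ.posSemidef).smul six)
  · exact ((hφ.one_sub_posSemidef.sl hSym).smul two).add ((hφ.posSemidef.sl hAsym).smul six)
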